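/- The exterior derivative squares to zero: d_{k+1} ∘ d_k = 0 for k = 0, 1, 2, 3. -/

import Mathlib

set_option maxHeartbeats 1600000

noncomputable section

open MulOpposite

structure Ctx where
  q : ℂ
  hq : IsPrimitiveRoot q 3
  A : Type
  [ringA : Ring A]
  [algA : Algebra ℂ A]
  a : A
  b : A
  c : A
  d : A
  rel_ba : b * a = q • (a * b)
  rel_ca : c * a = q • (a * c)
  rel_db : d * b = q • (b * d)
  rel_dc : d * c = q • (c * d)
  rel_cb : c * b = b * c
  rel_da : d * a - a * d = (q * (1 - (q ^ 2)⁻¹)) • (b * c)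
  rel_ad : a * d - q⁻¹ • (b * c) = 1
  rel_b3 : b ^ 3 = 0
  rel_c3 : c ^ 3 = 0
  rel_a3 : a ^ 3 = 1
  rel_d3 : d ^ 3 = 1
  basA : Module.Basis (Fin 3 × Fin 3 × Fin 3) ℂ A
  basA_eq : ∀ i : Fin 3 × Fin 3 × Fin 3,
    basA i = a ^ (i.1 : ℕ) * b ^ (i.2.1 : ℕ) * c ^ (i.2.2 : ℕ)
  Om : Type
  [ringOm : Ring Om]
  [algOm : Algebra ℂ Om]
  iA : A →ₐ[ℂ] Om
  iA_inj : Function.Injective iA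
  ea : Om
  eb : Om
  ec : Om
  ed : Om
  grade : ℕ → Submodule ℂ Om
  grade_internal : DirectSum.IsInternal grade
  grade_mul : ∀ i j : ℕ, ∀ x ∈ grade i, ∀ y ∈ grade j, x * y ∈ grade (i + j)
  grade_zero : grade 0 = Submodule.map iA.toLinearMap ⊤
  grade_top : ∀ k : ℕ, 5 ≤ k → grade k = ⊥
  ea_mem : ea ∈ grade 1
  eb_mem : eb ∈ grade 1
  ec_mem : ec ∈ grade 1
  ed_mem : ed ∈ grade 1
  free1 : ∀ f g : Fin 4 → A,
    ea * iA (f 0) + eb * iA (f 1) + ec * iA (f 2) + ed * iA (f 3) =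
      ea * iA (g 0) + eb * iA (g 1) + ec * iA (g 2) + ed * iA (g 3) → f = g
  span1 : ∀ x ∈ grade 1, ∃ f : Fin 4 → A,
    x = ea * iA (f 0) + eb * iA (f 1) + ec * iA (f 2) + ed * iA (f 3)
  free2 : ∀ f g : Fin 6 → A,
    ea * eb * iA (f 0) + ea * ec * iA (f 1) + ea * ed * iA (f 2) +
      eb * ec * iA (f 3) + eb * ed * iA (f 4) + ec * ed * iA (f 5) =
    ea * eb * iA (g 0) + ea * ec * iA (g 1) + ea * ed * iA (g 2) +
      eb * ec * iA (g 3) + eb * ed * iA (g 4) + ec * ed * iA (g 5) → f = g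
  span2 : ∀ x ∈ grade 2, ∃ f : Fin 6 → A,
    x = ea * eb * iA (f 0) + ea * ec * iA (f 1) + ea * ed * iA (f 2) +
      eb * ec * iA (f 3) + eb * ed * iA (f 4) + ec * ed * iA (f 5)
  free3 : ∀ f g : Fin 4 → A,
    ea * eb * ec * iA (f 0) + ea * eb * ed * iA (f 1) + ea * ec * ed * iA (f 2) +
      eb * ec * ed * iA (f 3) =
    ea * eb * ec * iA (g 0) + ea * eb * ed * iA (g 1) + ea * ec * ed * iA (g 2) +
      eb * ec * ed * iA (g 3) → f = g
  span3 : ∀ x ∈ grade 3, ∃ f : Fin 4 → A,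
    x = ea * eb * ec * iA (f 0) + ea * eb * ed * iA (f 1) + ea * ec * ed * iA (f 2) +
      eb * ec * ed * iA (f 3)
  free4 : ∀ f g : A, ea * eb * ec * ed * iA f = ea * eb * ec * ed * iA g → f = g
  span4 : ∀ x ∈ grade 4, ∃ f : A, x = ea * eb * ec * ed * iA f
  bm_c_eb : iA c * eb = eb * iA c
  bm_d_eb : iA d * eb = eb * iA d
  bm_c_ed : iA c * ed = q • (ed * iA c)
  bm_d_ed : iA d * ed = q • (ed * iA d)
  bm_a_ec : iA a * ec = ec * iA a
  bm_b_ec : iA b * ec = ec * iA b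
  bm_a_ed : iA a * ed = q⁻¹ • (ed * iA a)
  bm_b_ed : iA b * ed = q⁻¹ • (ed * iA b)
  bm_a_eb : iA a * eb = eb * iA a + (q * (1 - (q ^ 2)⁻¹)) • (ed * iA c)
  bm_b_eb : iA b * eb = eb * iA b + (q * (1 - (q ^ 2)⁻¹)) • (ed * iA d)
  bm_c_ec : iA c * ec = ec * iA c + (q * (1 - (q ^ 2)⁻¹)) • (ed * iA a)
  bm_d_ec : iA d * ec = ec * iA d + (q * (1 - (q ^ 2)⁻¹)) • (ed * iA b)
  bm_c_ea : iA c * ea = q⁻¹ • (ea * iA c) + (1 - (q ^ 2)⁻¹) • (eb * iA a)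
  bm_d_ea : iA d * ea = q⁻¹ • (ea * iA d) + (1 - (q ^ 2)⁻¹) • (eb * iA b)
  bm_a_ea : iA a * ea = q • (ea * iA a) + (1 - (q ^ 2)⁻¹) • (ec * iA c) +
    (q * (1 - (q ^ 2)⁻¹) ^ 2) • (ed * iA a)
  bm_b_ea : iA b * ea = q • (ea * iA b) + (1 - (q ^ 2)⁻¹) • (ec * iA d) +
    (q * (1 - (q ^ 2)⁻¹) ^ 2) • (ed * iA b)
  wr_bb : eb * eb = 0
  wr_cc : ec * ec = 0
  wr_dd : ed * ed = 0
  wr_bc : eb * ec = -(ec * eb)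
  wr_bd : eb * ed = -(ed * eb)
  wr_cd : ec * ed = -(ed * ec)
  wr_aa : ea * ea = (1 - (q ^ 2)⁻¹) • (eb * ec)
  wr_ad : ea * ed + ed * ea + (1 - (q ^ 2)⁻¹) • (eb * ec) = 0
  wr_ab : ea * eb + (q ^ 2) • (eb * ea) - (1 - (q ^ 2)⁻¹) • (eb * ed) = 0
  wr_ca : ec * ea + (q ^ 2) • (ea * ec) + (1 - (q ^ 2)⁻¹) • (ec * ed) = 0
  D : Om →ₗ[ℂ] Om
  D_grade : ∀ k : ℕ, ∀ x ∈ grade k, D x ∈ grade (k + 1)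
  D_leibniz : ∀ k : ℕ, ∀ x ∈ grade k, ∀ y : Om,
    D (x * y) = D x * y + ((-1 : ℂ) ^ k) • (x * D y)
  D_iA : ∀ f : A, D (iA f) = iA f * (ea + ed) - (ea + ed) * iA f
  D_ea : D ea = -((1 - (q ^ 2)⁻¹) • (eb * ec))
  D_ed : D ed = (1 - (q ^ 2)⁻¹) • (eb * ec)
  D_eb : D eb = -((1 - (q ^ 2)⁻¹) • (ea * eb + (q ^ 2)⁻¹ • (eb * ed)))
  D_ec : D ec = (1 - (q ^ 2)⁻¹) • ((q ^ 2) • (ea * ec) + ec * ed)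

attribute [instance] Ctx.ringA Ctx.algA Ctx.ringOm Ctx.algOm

noncomputable def Ctx.mu (X : Ctx) : ℂ := 1 - (X.q ^ 2)⁻¹

/-- θ = e_a + e_d -/
noncomputable def Ctx.th (X : Ctx) : X.Om := X.ea + X.ed

/-- ker d_k -/
noncomputable def Ctx.kerd (X : Ctx) (k : ℕ) : Submodule ℂ X.Om :=
  X.grade k ⊓ LinearMap.ker X.D

/-- im d_k -/
noncomputable def Ctx.imd (X : Ctx) (k : ℕ) : Submodule ℂ X.Om :=
  Submodule.map X.D (X.grade k)

/-! On homogeneous forms of degree `k` the differential is inner: `d x = (-1)^k x θ - θ x`.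
This holds on `A` by definition of `d₀`, is checked on the four generators `e_a, e_b, e_c, e_d`
from the relations of `Λ`, and propagates to all of `Ω` by the graded Leibniz rule, since every
form is a sum of products of generators and functions. As `θ ∧ θ = 0`, applying this twice gives
`d (d x) = 0`. -/

namespace Ctx

variable (X : Ctx)

def innerAt (k : ℕ) : Submodule ℂ X.Om where
  carrier := {x | X.D x = ((-1 : ℂ) ^ k) • (x * X.th) - X.th * x}
  add_mem' {x y} hx hy := by
    simp only [Set.mem_ofPred_eq, map_add, add_mul, mul_add] at *
    rw [hx, hy]
    module
  zero_mem' := by simp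
  smul_mem' c x hx := by
    simp only [Set.mem_ofPred_eq, map_smul, smul_mul_assoc, mul_smul_comm] at *
    rw [hx]
    module

variable {X}

lemma mem_innerAt {k : ℕ} {x : X.Om} :
    x ∈ X.innerAt k ↔ X.D x = ((-1 : ℂ) ^ k) • (x * X.th) - X.th * x :=
  Iff.rfl

lemma q_ne_zero : X.q ≠ 0 := X.hq.ne_zero (by norm_num)

lemma th_mul_th : X.th * X.th = 0 := by
  simp only [th, mul_add, add_mul, X.wr_aa, X.wr_dd]
  linear_combination (norm := module) X.wr_ad

lemma iA_mem_innerAt (f : X.A) : X.iA f ∈ X.innerAt 0 := by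
  rw [mem_innerAt, X.D_iA]
  simp [th]

lemma ea_mem_innerAt : X.ea ∈ X.innerAt 1 := by
  rw [mem_innerAt, X.D_ea]
  simp only [th, mul_add, add_mul]
  linear_combination (norm := module) (2 : ℂ) • X.wr_aa + X.wr_ad

lemma ed_mem_innerAt : X.ed ∈ X.innerAt 1 := by
  rw [mem_innerAt, X.D_ed]
  simp only [th, mul_add, add_mul]
  linear_combination (norm := module) (2 : ℂ) • X.wr_dd + X.wr_ad

lemma eb_mem_innerAt : X.eb ∈ X.innerAt 1 := by
  rw [mem_innerAt, X.D_eb]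
  simp only [th, mul_add, add_mul]
  have hq := q_ne_zero (X := X)
  linear_combination (norm := skip) (X.q ^ 2)⁻¹ • X.wr_ab + X.wr_bd
  match_scalars <;> field_simp <;> ring

lemma ec_mem_innerAt : X.ec ∈ X.innerAt 1 := by
  rw [mem_innerAt, X.D_ec]
  simp only [th, mul_add, add_mul]
  have hq := q_ne_zero (X := X)
  linear_combination (norm := skip) X.wr_ca + X.wr_cd
  match_scalars <;> field_simp <;> ring

lemma mul_mem_innerAt {i j : ℕ} {x y : X.Om} (hx : x ∈ X.grade i) (hx' : x ∈ X.innerAt i)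
    (hy : y ∈ X.innerAt j) : x * y ∈ X.innerAt (i + j) := by
  rw [mem_innerAt] at *
  rw [X.D_leibniz i x hx y, hx', hy, pow_add]
  simp only [sub_mul, mul_sub, smul_mul_assoc, mul_smul_comm, smul_sub, smul_smul, mul_assoc]
  module

lemma generator_mul_mem_innerAt {e y : X.Om} {j : ℕ}
    (he : e = X.ea ∨ e = X.eb ∨ e = X.ec ∨ e = X.ed) (hy : y ∈ X.innerAt j) :
    e * y ∈ X.innerAt (j + 1) := by
  rw [add_comm]
  rcases he with rfl | rfl | rfl | rfl
  · exact mul_mem_innerAt X.ea_mem ea_mem_innerAt hy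
  · exact mul_mem_innerAt X.eb_mem eb_mem_innerAt hy
  · exact mul_mem_innerAt X.ec_mem ec_mem_innerAt hy
  · exact mul_mem_innerAt X.ed_mem ed_mem_innerAt hy

lemma grade_le_innerAt {k : ℕ} (hk : k ≤ 4) : X.grade k ≤ X.innerAt k := by
  have h0 : X.grade 0 ≤ X.innerAt 0 := by
    rw [X.grade_zero]
    rintro _ ⟨f, -, rfl⟩
    exact iA_mem_innerAt f
  intro x hx
  interval_cases k
  · exact h0 hx
  on_goal 1 => obtain ⟨f, rfl⟩ := X.span1 x hx
  on_goal 2 => obtain ⟨f, rfl⟩ := X.span2 x hx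
  on_goal 3 => obtain ⟨f, rfl⟩ := X.span3 x hx
  on_goal 4 => obtain ⟨f, rfl⟩ := X.span4 x hx
  all_goals
    try simp only [mul_assoc]
    repeat' first
      | exact iA_mem_innerAt _
      | apply add_mem
      | apply generator_mul_mem_innerAt (by simp)

lemma D_D_eq_zero_of_mem_innerAt {k : ℕ} {x : X.Om} (hx : x ∈ X.innerAt k)
    (hDx : X.D x ∈ X.innerAt (k + 1)) : X.D (X.D x) = 0 := by
  rw [mem_innerAt] at hx hDx
  have hθθ : ∀ y, X.th * (X.th * y) = 0 := fun y => by rw [← mul_assoc, th_mul_th, zero_mul]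
  rw [hDx, hx]
  simp only [sub_mul, mul_sub, smul_mul_assoc, mul_smul_comm, smul_sub, mul_assoc, th_mul_th, hθθ,
    mul_zero, smul_zero]
  module

end Ctx

theorem stmt4 (X : Ctx) :
    ∀ k : ℕ, k ≤ 3 → ∀ x ∈ X.grade k, X.D (X.D x) = 0 := by
  intro k hk x hx
  exact Ctx.D_D_eq_zero_of_mem_innerAt (Ctx.grade_le_innerAt (by omega) hx)
    (Ctx.grade_le_innerAt (by omega) (X.D_grade k x hx))
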